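/- Let k ≥ 1 and suppose v ∈ ℝ^{8+k} has all entries positive and satisfies the block system: U₁₁v₁ + U₁₂v₂ = [1]_{5×1}, U₂₁v₁ + U₂₂v₂ + [1]_{3×k}v₃ = [1]_{3×1}, [1]_{k×3}v₂ + 3v₃ = [1]_{k×1}, where [U₁₁ U₁₂; U₂₁ U₂₂] = U₈ is the 8×8 Gram matrix. Then the number a = 1 − Σ_{i=9}^{8+k} v_i lies strictly between 0 and 1. -/

import Mathlib

/-! Row 5 of the system reads `(U₈ v)₅ + Σ v₃ = 1`. Since `U₈` is entrywise nonnegative with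
positive diagonal, `(U₈ v)₅ > 0` for positive `v`, and `Σ v₃ > 0` as `k ≥ 1`; so
`a = 1 - Σ v₃ = (U₈ v)₅` lies in `(0, 1)`. -/

noncomputable def U8 : Matrix (Fin 8) (Fin 8) ℝ :=
  !![3,1,1,1,0,0,0,1;
     1,3,1,0,1,1,0,0;
     1,1,3,0,0,0,1,0;
     1,0,0,3,1,1,1,0;
     0,1,0,1,3,0,1,1;
     0,1,0,1,0,3,1,1;
     0,0,1,1,1,1,3,1;
     1,0,0,0,1,1,1,3]

lemma U8_nonneg (i j : Fin 8) : 0 ≤ U8 i j := by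
  fin_cases i <;> fin_cases j <;> simp [U8]

lemma U8_diag (i : Fin 8) : U8 i i = 3 := by
  fin_cases i <;> simp [U8]

lemma sum_mul_pos_of_nonneg {ι : Type*} [Fintype ι] {a v : ι → ℝ}
    (ha : ∀ j, 0 ≤ a j) {j₀ : ι} (hj₀ : 0 < a j₀) (hv : ∀ j, 0 < v j) :
    0 < ∑ j, a j * v j :=
  Finset.sum_pos' (fun j _ => mul_nonneg (ha j) (hv j).le)
    ⟨j₀, Finset.mem_univ _, mul_pos hj₀ (hv j₀)⟩

lemma sum_U8_mul_pos {v : Fin 8 → ℝ} (hv : ∀ j, 0 < v j) (i : Fin 8) :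
    0 < ∑ j, U8 i j * v j :=
  sum_mul_pos_of_nonneg (U8_nonneg i) (j₀ := i) (by rw [U8_diag]; norm_num) hv

theorem stmt16_general (k : ℕ) (hk : 1 ≤ k)
    (v : Fin 8 → ℝ) (v₃ : Fin k → ℝ)
    (hvpos : ∀ i, 0 < v i) (hv₃pos : ∀ l, 0 < v₃ l)
    (h2 : ∀ i : Fin 8, 5 ≤ (i : ℕ) → ∑ j, U8 i j * v j + ∑ l, v₃ l = 1) :
    0 < 1 - ∑ l, v₃ l ∧ 1 - ∑ l, v₃ l < 1 := by
  have hrow := h2 5 le_rfl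
  have hU := sum_U8_mul_pos hvpos 5
  have : Nonempty (Fin k) := Fin.pos_iff_nonempty.mp hk
  have hS : 0 < ∑ l, v₃ l := Finset.sum_pos (fun l _ => hv₃pos l) Finset.univ_nonempty
  constructor <;> linarith

/-- Suppose `(v, v₃) ∈ ℝ^{8+k}` has all positive entries and satisfies the
block system `U₁₁v₁ + U₁₂v₂ = 1`, `U₂₁v₁ + U₂₂v₂ + [1]v₃ = 1`,
`[1]v₂ + 3v₃ = 1` (rows `0–4`, rows `5–7`, and the last `k` rows of the full
Gram matrix).  Then `a = 1 − Σ (v₃)ᵢ` lies strictly between `0` and `1`. -/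
theorem stmt16 (k : ℕ) (hk : 1 ≤ k)
    (v : Fin 8 → ℝ) (v₃ : Fin k → ℝ)
    (hvpos : ∀ i, 0 < v i) (hv₃pos : ∀ l, 0 < v₃ l)
    (h1 : ∀ i : Fin 8, (i : ℕ) < 5 → ∑ j, U8 i j * v j = 1)
    (h2 : ∀ i : Fin 8, 5 ≤ (i : ℕ) → ∑ j, U8 i j * v j + ∑ l, v₃ l = 1)
    (h3 : ∀ l : Fin k, (v 5 + v 6 + v 7) + 3 * v₃ l = 1) :
    0 < 1 - ∑ l, v₃ l ∧ 1 - ∑ l, v₃ l < 1 :=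
  stmt16_general k hk v v₃ hvpos hv₃pos h2
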